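/- Let X be an invertible Hermitian d×d complex matrix. Then the trace norm t(Y) := ‖Y‖₁, as a function on the real vector space of Hermitian d×d complex matrices, is Fréchet differentiable at X with derivative H ↦ Tr[sign(X) · H]. -/

import Mathlib

open Matrix BigOperators
open scoped ComplexOrder Classical

attribute [local instance] Matrix.frobeniusNormedAddCommGroup Matrix.frobeniusNormedSpace

/-- Junk-valued positive semidefinite square root: for a positive semidefinite matrix it is
the PSD square root, otherwise it is `0`. -/
noncomputable def msqrt {n : Type*} [Fintype n] [DecidableEq n]
    (M : Matrix n n ℂ) : Matrix n n ℂ :=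
  if h : M.PosSemidef then
    (h.1.eigenvectorUnitary : Matrix n n ℂ) *
      Matrix.diagonal ((↑) ∘ (fun x : ℝ => Real.sqrt x) ∘ h.1.eigenvalues) *
      (star h.1.eigenvectorUnitary : Matrix n n ℂ)
  else 0

/-- The trace norm `‖M‖₁ = Tr √(Mᴴ M)` of a square complex matrix. -/
noncomputable def traceNorm {n : Type*} [Fintype n] [DecidableEq n]
    (M : Matrix n n ℂ) : ℝ :=
  (msqrt (Mᴴ * M)).trace.re

/-- Junk-valued matrix sign function: for a Hermitian matrix it applies `Real.sign`
(with `sign 0 = 0`) to the eigenvalues through the spectral decomposition, otherwise `0`. -/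
noncomputable def msign {n : Type*} [Fintype n] [DecidableEq n]
    (M : Matrix n n ℂ) : Matrix n n ℂ :=
  if h : M.IsHermitian then
    (h.eigenvectorUnitary : Matrix n n ℂ) *
      Matrix.diagonal (fun i => (Real.sign (h.eigenvalues i) : ℂ)) *
      (h.eigenvectorUnitary : Matrix n n ℂ)ᴴ
  else 0

/-- The continuous ℝ-linear functional `H ↦ Re Tr[B · H]` on complex matrices. -/
noncomputable def traceMulCLM {n : Type*} [Fintype n] [DecidableEq n]
    (B : Matrix n n ℂ) : Matrix n n ℂ →L[ℝ] ℝ :=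
  LinearMap.toContinuousLinearMap
    (Complex.reLm.comp
      (((Matrix.traceLinearMap n ℂ ℂ).restrictScalars ℝ).comp
        ((LinearMap.mulLeft ℂ B).restrictScalars ℝ)))

/-!
For Hermitian `Y`, `Z`, the matrix `sign Z` is a contraction, so `Re Tr[sign(Z) Y] ≤ ‖Y‖₁`, with
equality for `Z = Y`. Hence the remainder
`r(Y) = ‖Y‖₁ - ‖X‖₁ - Re Tr[sign(X) (Y - X)] = ‖Y‖₁ - Re Tr[sign(X) Y]` satisfies
`0 ≤ r(Y) ≤ Re Tr[(sign Y - sign X) (Y - X)] ≤ ‖sign Y - sign X‖ ‖Y - X‖`.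
Since `X` is invertible, the spectra of nearby Hermitian matrices avoid `0`, where `sign` is
continuous, so `sign Y → sign X` and `r(Y) = o(‖Y - X‖)`.
-/

lemma Real.sign_mul_self_eq_abs (t : ℝ) : Real.sign t * t = |t| := by
  rcases lt_trichotomy t 0 with h | rfl | h
  · rw [Real.sign_of_neg h, abs_of_neg h, neg_one_mul]
  · simp
  · rw [Real.sign_of_pos h, abs_of_pos h, one_mul]

lemma Real.abs_sign_le_one (t : ℝ) : |Real.sign t| ≤ 1 := by
  rcases Real.sign_apply_eq t with h | h | h <;> simp [h]

lemma Real.continuousOn_sign : ContinuousOn Real.sign {0}ᶜ := by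
  refine (continuousOn_id.div continuous_abs.continuousOn fun t ht => abs_ne_zero.mpr ht).congr ?_
  intro t ht
  rcases Ne.lt_or_gt ht with h | h
  · simp [Real.sign_of_neg h, abs_of_neg h, h.ne]
  · simp [Real.sign_of_pos h, abs_of_pos h, h.ne']

open Filter Asymptotics in
lemma hasFDerivWithinAt_of_norm_sub_le_mul {𝕜 E F G : Type*} [NontriviallyNormedField 𝕜]
    [NormedAddCommGroup E] [NormedSpace 𝕜 E] [NormedAddCommGroup F] [NormedSpace 𝕜 F]
    [SeminormedAddCommGroup G] {f : E → F} {f' : E →L[𝕜] F} {g : E → G} {s : Set E} {x : E}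
    (hg : ContinuousWithinAt g s x)
    (hf : ∀ y ∈ s, ‖f y - f x - f' (y - x)‖ ≤ ‖g y - g x‖ * ‖y - x‖) :
    HasFDerivWithinAt f f' s x := by
  have hsmall : (fun y => ‖g y - g x‖ * ‖y - x‖) =o[nhdsWithin x s] (fun y => y - x) := by
    have h0 := (isLittleO_one_iff ℝ).mpr (tendsto_iff_norm_sub_tendsto_zero.mp hg)
    simpa using h0.mul_isBigO (isBigO_refl (fun y => ‖y - x‖) _)
  refine HasFDerivWithinAt.of_isLittleO (IsBigO.trans_isLittleO ?_ hsmall)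
  refine IsBigO.of_bound' ?_
  filter_upwards [self_mem_nhdsWithin] with y hy
  exact (hf y hy).trans (le_abs_self _)

namespace Matrix

section Frobenius

variable {m k 𝕜 : Type*} [Fintype m] [Fintype k] [RCLike 𝕜]

lemma frobenius_norm_eq_sqrt_sum (A : Matrix m k 𝕜) :
    ‖A‖ = √(∑ p : m × k, ‖A p.1 p.2‖ ^ 2) := by
  rw [frobenius_norm_def, Real.sqrt_eq_rpow, Fintype.sum_prod_type]
  simp only [Real.rpow_two]

lemma frobenius_norm_trace_mul_le (A : Matrix m k 𝕜) (B : Matrix k m 𝕜) :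
    ‖(A * B).trace‖ ≤ ‖A‖ * ‖B‖ := by
  calc ‖(A * B).trace‖ = ‖∑ p : m × k, A p.1 p.2 * Bᵀ p.1 p.2‖ := by
        simp [trace, mul_apply, Fintype.sum_prod_type]
    _ ≤ ∑ p : m × k, ‖A p.1 p.2‖ * ‖Bᵀ p.1 p.2‖ :=
        norm_sum_le_of_le _ fun p _ => norm_mul_le _ _
    _ ≤ ‖A‖ * ‖Bᵀ‖ := by
        rw [frobenius_norm_eq_sqrt_sum, frobenius_norm_eq_sqrt_sum]
        exact Real.sum_mul_le_sqrt_mul_sqrt _ _ _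
    _ = ‖A‖ * ‖B‖ := by rw [frobenius_norm_transpose]

end Frobenius

variable {n : Type*} [Fintype n] [DecidableEq n]

lemma norm_conjTranspose_mul_diagonal_mul_apply_le_one {W : Matrix n n ℂ}
    (hW : W ∈ unitaryGroup n ℂ) {s : n → ℂ} (hs : ∀ k, ‖s k‖ ≤ 1) (i : n) :
    ‖(Wᴴ * diagonal s * W) i i‖ ≤ 1 := by
  have hcol : ∑ k, ‖W k i‖ ^ 2 = 1 := by
    have h := congrFun (congrFun (mem_unitaryGroup_iff'.mp hW) i) i
    simp only [star_eq_conjTranspose, mul_apply, conjTranspose_apply, one_apply_eq,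
      RCLike.star_def, Complex.conj_mul'] at h
    norm_cast at h
  calc ‖(Wᴴ * diagonal s * W) i i‖ = ‖∑ k, star (W k i) * s k * W k i‖ := by
        rw [mul_apply]
        simp [mul_diagonal]
    _ ≤ ∑ k, ‖W k i‖ ^ 2 * ‖s k‖ := by
        refine (norm_sum_le _ _).trans (Finset.sum_le_sum fun k _ => le_of_eq ?_)
        simp only [norm_mul, norm_star]
        ring
    _ ≤ ∑ k, ‖W k i‖ ^ 2 :=
        Finset.sum_le_sum fun k _ => mul_le_of_le_one_right (by positivity) (hs k)
    _ = 1 := hcol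

lemma IsHermitian.trace_cfc {Y : Matrix n n ℂ} (hY : Y.IsHermitian) (f : ℝ → ℝ) :
    (cfc f Y).trace = ∑ i, (f (hY.eigenvalues i) : ℂ) := by
  rw [hY.cfc_eq, IsHermitian.cfc, Unitary.conjStarAlgAut_apply, trace_mul_cycle,
    Unitary.coe_star_mul_self, one_mul, trace_diagonal]
  rfl

lemma re_trace_cfc_mul_le_sum_abs_eigenvalues {Z Y : Matrix n n ℂ} (hZ : Z.IsHermitian)
    (hY : Y.IsHermitian) {f : ℝ → ℝ} (hf : ∀ t, |f t| ≤ 1) :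
    (cfc f Z * Y).trace.re ≤ ∑ i, |hY.eigenvalues i| := by
  set V : Matrix n n ℂ := (hZ.eigenvectorUnitary : Matrix n n ℂ)
  set U : Matrix n n ℂ := (hY.eigenvectorUnitary : Matrix n n ℂ)
  set D := diagonal (RCLike.ofReal ∘ f ∘ hZ.eigenvalues : n → ℂ)
  set W := Vᴴ * U
  have hW : W ∈ unitaryGroup n ℂ :=
    Submonoid.mul_mem _ (Unitary.star_mem hZ.eigenvectorUnitary.2) hY.eigenvectorUnitary.2
  have hcfc : cfc f Z = V * D * Vᴴ := by rw [hZ.cfc_eq]; rfl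
  have hYdiag : Y = U * diagonal (RCLike.ofReal ∘ hY.eigenvalues) * Uᴴ := by
    conv_lhs => rw [hY.spectral_theorem]
    rfl
  have htrace : (cfc f Z * Y).trace = ∑ i, (Wᴴ * D * W) i i * hY.eigenvalues i := by
    have hcycle : (cfc f Z * Y).trace =
        (Wᴴ * D * W * diagonal (RCLike.ofReal ∘ hY.eigenvalues)).trace := by
      conv_lhs => rw [hcfc, hYdiag]
      rw [conjTranspose_mul, conjTranspose_conjTranspose, mul_assoc Uᴴ, mul_assoc Uᴴ,
        mul_assoc Uᴴ, trace_mul_comm Uᴴ]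
      simp only [W, mul_assoc]
    rw [hcycle]
    simp only [trace, diag_apply, mul_diagonal]
    rfl
  rw [htrace, Complex.re_sum]
  refine Finset.sum_le_sum fun i _ => ?_
  calc _ ≤ ‖(Wᴴ * D * W) i i * hY.eigenvalues i‖ := Complex.re_le_norm _
    _ ≤ 1 * |hY.eigenvalues i| := by
        rw [norm_mul, Complex.norm_real, Real.norm_eq_abs]
        gcongr
        exact norm_conjTranspose_mul_diagonal_mul_apply_le_one hW (fun k => by simpa using hf _) i
    _ = _ := one_mul _

end Matrix

variable {n : Type*} [Fintype n] [DecidableEq n]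

lemma msqrt_eq_cfc {M : Matrix n n ℂ} (hM : M.PosSemidef) : msqrt M = cfc Real.sqrt M := by
  rw [msqrt, dif_pos hM, hM.1.cfc_eq]
  rfl

lemma msign_eq_cfc {Y : Matrix n n ℂ} (hY : Y.IsHermitian) : msign Y = cfc Real.sign Y := by
  rw [msign, dif_pos hY, hY.cfc_eq]
  rfl

lemma traceNorm_eq_sum_abs_eigenvalues {Y : Matrix n n ℂ} (hY : Y.IsHermitian) :
    traceNorm Y = ∑ i, |hY.eigenvalues i| := by
  have hsq : Yᴴ * Y = cfc (· ^ 2 : ℝ → ℝ) Y := by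
    rw [cfc_pow_id Y 2 hY.isSelfAdjoint, hY.eq, sq]
  have habs : cfc Real.sqrt (cfc (· ^ 2 : ℝ → ℝ) Y) = cfc (fun t : ℝ => |t|) Y := by
    rw [← cfc_comp' Real.sqrt (· ^ 2) Y ((Y.finite_real_spectrum.image _).continuousOn _)
      (Y.finite_real_spectrum.continuousOn _) hY.isSelfAdjoint]
    simp only [Real.sqrt_sq_eq_abs]
  rw [traceNorm, msqrt_eq_cfc (Matrix.posSemidef_conjTranspose_mul_self Y), hsq, habs,
    hY.trace_cfc]
  simp

lemma re_trace_msign_mul_self {Y : Matrix n n ℂ} (hY : Y.IsHermitian) :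
    (msign Y * Y).trace.re = traceNorm Y := by
  have hprod : msign Y * Y = cfc (fun t => Real.sign t * t) Y := by
    rw [cfc_mul _ _ Y (Y.finite_real_spectrum.continuousOn _)
      (Y.finite_real_spectrum.continuousOn _), cfc_id' ℝ Y hY.isSelfAdjoint, msign_eq_cfc hY]
  rw [hprod]
  simp [Real.sign_mul_self_eq_abs, hY.trace_cfc, traceNorm_eq_sum_abs_eigenvalues hY]

lemma re_trace_msign_mul_le_traceNorm {Z Y : Matrix n n ℂ} (hZ : Z.IsHermitian)
    (hY : Y.IsHermitian) : (msign Z * Y).trace.re ≤ traceNorm Y := by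
  rw [msign_eq_cfc hZ, traceNorm_eq_sum_abs_eigenvalues hY]
  exact re_trace_cfc_mul_le_sum_abs_eigenvalues hZ hY Real.abs_sign_le_one

lemma abs_traceNorm_sub_sub_le {X Y : Matrix n n ℂ} (hX : X.IsHermitian) (hY : Y.IsHermitian) :
    |traceNorm Y - traceNorm X - (msign X * (Y - X)).trace.re| ≤
      ‖msign Y - msign X‖ * ‖Y - X‖ := by
  have hexpand : ((msign Y - msign X) * (Y - X)).trace.re =
      traceNorm Y - (msign Y * X).trace.re - (msign X * Y).trace.re + traceNorm X := by
    simp only [sub_mul, mul_sub, trace_sub, Complex.sub_re, re_trace_msign_mul_self hX,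
      re_trace_msign_mul_self hY]
    ring
  have hlower := re_trace_msign_mul_le_traceNorm hX hY
  have hcross := re_trace_msign_mul_le_traceNorm hY hX
  have hupper := (Complex.re_le_norm _).trans
    (frobenius_norm_trace_mul_le (msign Y - msign X) (Y - X))
  rw [mul_sub, trace_sub, Complex.sub_re, re_trace_msign_mul_self hX, abs_le]
  constructor <;> linarith

lemma continuousOn_cfc_sign :
    ContinuousOn (cfc Real.sign : Matrix n n ℂ → Matrix n n ℂ)
      {Y | Y.IsHermitian ∧ IsUnit Y.det} := by
  -- `ContinuousOn.cfc_of_mem_nhdsSet` needs a C⋆-norm; the L2 operator norm induces the same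
  -- topology as the Frobenius norm.
  open scoped Matrix.Norms.L2Operator in
  refine ContinuousOn.cfc_of_mem_nhdsSet (s := {0}ᶜ) (a := id) Real.sign ?_ continuousOn_id
    (fun Y hY => hY.1.isSelfAdjoint) Real.continuousOn_sign
  refine isOpen_compl_singleton.mem_nhdsSet.mpr ?_
  simp only [Set.iUnion_subset_iff]
  intro Y hY
  simpa [Set.subset_compl_singleton_iff, spectrum.zero_notMem_iff, isUnit_iff_isUnit_det]
    using hY.2

lemma continuousWithinAt_msign {X : Matrix n n ℂ} (hX : X.IsHermitian) (hinv : IsUnit X.det) :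
    ContinuousWithinAt msign {Y | Y.IsHermitian} X := by
  have hopen : IsOpen {Y : Matrix n n ℂ | IsUnit Y.det} :=
    (continuous_id.matrix_det).isOpen_preimage _ Units.isOpen
  have hnhds := inter_mem_nhdsWithin {Y : Matrix n n ℂ | Y.IsHermitian} (hopen.mem_nhds hinv)
  exact ((continuousOn_cfc_sign X ⟨hX, hinv⟩).mono_of_mem_nhdsWithin hnhds).congr
    (fun Y hY => msign_eq_cfc hY) (msign_eq_cfc hX)

/-- The trace norm is Fréchet differentiable, within the real vector space of Hermitian
matrices, at any invertible Hermitian `X`, with derivative `H ↦ Tr[sign(X) · H]`. -/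
theorem hasFDerivWithinAt_traceNorm {d : ℕ}
    (X : Matrix (Fin d) (Fin d) ℂ) (hX : X.IsHermitian) (hinv : IsUnit X.det) :
    HasFDerivWithinAt (fun Y : Matrix (Fin d) (Fin d) ℂ => traceNorm Y)
      (traceMulCLM (msign X))
      {Y : Matrix (Fin d) (Fin d) ℂ | Y.IsHermitian} X := by
  exact hasFDerivWithinAt_of_norm_sub_le_mul (continuousWithinAt_msign hX hinv) fun _ hY =>
    abs_traceNorm_sub_sub_le hX hY
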